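/- arXiv:2509.21057 — 2 statements merged into one kernel-verified Lean document; each statement's English description precedes it below -/
import Mathlib

section
/- In the setting of the closed-form watermarked PMF, the watermarked distribution P^w equals the original distribution P (i.e., A(u) = 1 for all u ∈ U, where A(u) = (1/C(M,m)) ∑_{S: |S|=m, u∈S} 1/q(S)) if and only if q(u) = 1/M for every u ∈ U. -/
open scoped BigOperators
open Finset

lemma card_filter_mem_powersetCard {U : Type*} [Fintype U] [DecidableEq U]
    (u : U) (m : ℕ) (hm : 0 < m) :
    ((Finset.univ.powersetCard m).filter (fun S => u ∈ S)).card
      = (Fintype.card U - 1).choose (m - 1) := by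
  rw [← Finset.card_univ, ← Finset.card_erase_of_mem (Finset.mem_univ u),
    ← Finset.card_powersetCard]
  apply Finset.card_bij (fun S _ => S.erase u)
  · intro S hS
    simp only [mem_filter, mem_powersetCard] at hS
    rw [Finset.mem_powersetCard]
    refine ⟨fun x hx => ?_, ?_⟩
    · simp only [mem_erase] at hx ⊢
      exact ⟨hx.1, Finset.mem_univ _⟩
    · rw [Finset.card_erase_of_mem hS.2, hS.1.2]
  · intro S hS T hT h
    simp only [mem_filter] at hS hT
    rw [← Finset.insert_erase hS.2, ← Finset.insert_erase hT.2, h]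
  · intro T hT
    rw [Finset.mem_powersetCard] at hT
    have hu : u ∉ T := fun h => (Finset.mem_erase.mp (hT.1 h)).1 rfl
    refine ⟨insert u T, ?_, ?_⟩
    · simp only [mem_filter, mem_powersetCard]
      refine ⟨⟨Finset.subset_univ _, ?_⟩, Finset.mem_insert_self _ _⟩
      rw [Finset.card_insert_of_notMem hu, hT.2]
      omega
    · rw [Finset.erase_insert hu]

/-- Distortion-freeness of the Green-Red semantic watermark holds iff the proxy
masses are uniform: `A(u) = 1` for all `u` iff `q(u) = 1/M` for all `u`. -/
theorem watermark_distortion_free_iff_uniform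
    {U : Type*} [Fintype U] [DecidableEq U]
    (q : U → ℝ) (hq_pos : ∀ u, 0 < q u) (hq_sum : ∑ u, q u = 1)
    (M m : ℕ) (hM : M = Fintype.card U) (hm_pos : 0 < m) (hm_lt : m < M)
    (A : U → ℝ)
    (hA : ∀ u, A u = (1 / (M.choose m : ℝ)) *
      ∑ S ∈ (Finset.univ.powersetCard m).filter (fun S => u ∈ S),
        1 / (∑ v ∈ S, q v)) :
    (∀ u, A u = 1) ↔ (∀ u, q u = 1 / M) := by
  have hM0 : (0:ℝ) < M := by exact_mod_cast (by omega : 0 < M)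
  have hm0 : (0:ℝ) < m := by exact_mod_cast hm_pos
  have hC : 0 < M.choose m := Nat.choose_pos hm_lt.le
  have hC0 : (0:ℝ) < M.choose m := by exact_mod_cast hC
  have hpos : ∀ S : Finset U, S ∈ Finset.univ.powersetCard m → 0 < ∑ v ∈ S, q v := by
    intro S hS
    rw [Finset.mem_powersetCard] at hS
    have : S.Nonempty := Finset.card_pos.mp (hS.2 ▸ hm_pos)
    exact Finset.sum_pos (fun v _ => hq_pos v) this
  constructor
  · -- necessity
    intro hA1
    -- all q values are equal
    have key : ∀ u v : U, q v < q u → False := by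
      intro u v hlt
      have huv : u ≠ v := by rintro rfl; exact lt_irrefl _ hlt
      set e := Equiv.swap u v with he
      set Tu := (Finset.univ.powersetCard m).filter (fun S => u ∈ S) with hTu
      set Tv := (Finset.univ.powersetCard m).filter (fun S => v ∈ S) with hTv
      -- rewrite the v-sum as a sum over Tu
      have himg : ∀ S : Finset U, (S.image e).image e = S := by
        intro S
        rw [Finset.image_image]
        have : (⇑e ∘ ⇑e) = id := by
          funext x; simp [e, Equiv.swap_apply_self]
        rw [this, Finset.image_id]
      have hmemTu : ∀ S : Finset U, S ∈ Tu ↔ S ⊆ Finset.univ ∧ S.card = m ∧ u ∈ S := by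
        intro S; simp [hTu, Finset.mem_powersetCard, and_assoc]
      have hmemTv : ∀ S : Finset U, S ∈ Tv ↔ S ⊆ Finset.univ ∧ S.card = m ∧ v ∈ S := by
        intro S; simp [hTv, Finset.mem_powersetCard, and_assoc]
      have hmap : ∀ S ∈ Tu, S.image e ∈ Tv := by
        intro S hS
        rw [hmemTu] at hS
        rw [hmemTv]
        refine ⟨Finset.subset_univ _, ?_, ?_⟩
        · rw [Finset.card_image_of_injective _ e.injective, hS.2.1]
        · have : e u ∈ S.image e := Finset.mem_image_of_mem _ hS.2.2
          simpa [e, Equiv.swap_apply_left] using this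
      have hmap' : ∀ S ∈ Tv, S.image e ∈ Tu := by
        intro S hS
        rw [hmemTv] at hS
        rw [hmemTu]
        refine ⟨Finset.subset_univ _, ?_, ?_⟩
        · rw [Finset.card_image_of_injective _ e.injective, hS.2.1]
        · have : e v ∈ S.image e := Finset.mem_image_of_mem _ hS.2.2
          simpa [e, Equiv.swap_apply_right] using this
      have hsum_eq : ∑ S ∈ Tv, 1 / (∑ w ∈ S, q w)
          = ∑ S ∈ Tu, 1 / (∑ w ∈ S.image e, q w) := by
        refine Finset.sum_nbij' (fun S => S.image e) (fun S => S.image e)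
          hmap' hmap (fun S _ => himg S) (fun S _ => himg S) ?_
        intro S hS
        rw [himg S]
      -- termwise comparison
      have hle : ∀ S ∈ Tu, 1 / (∑ w ∈ S, q w) ≤ 1 / (∑ w ∈ S.image e, q w) := by
        intro S hS
        rw [hmemTu] at hS
        by_cases hv : v ∈ S
        · have hSS : S.image e = S := by
            apply Finset.eq_of_subset_of_card_le
            · intro x hx
              rw [Finset.mem_image] at hx
              obtain ⟨y, hy, rfl⟩ := hx
              rcases eq_or_ne y u with rfl | hyu
              · simpa [e, Equiv.swap_apply_left] using hv
              rcases eq_or_ne y v with rfl | hyv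
              · simpa [e, Equiv.swap_apply_right] using hS.2.2
              · rwa [Equiv.swap_apply_of_ne_of_ne hyu hyv]
            · rw [Finset.card_image_of_injective _ e.injective]
          rw [hSS]
        · -- strict case gives ≤ too
          have hkey : ∑ w ∈ S.image e, q w = q v + ∑ w ∈ S.erase u, q w := by
            rw [Finset.sum_image (fun a _ b _ h => e.injective h)]
            rw [← Finset.add_sum_erase S (fun x => q (e x)) hS.2.2]
            congr 1
            · simp [e, Equiv.swap_apply_left]
            · apply Finset.sum_congr rfl
              intro w hw
              have hwu : w ≠ u := (Finset.mem_erase.mp hw).1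
              have hwv : w ≠ v := fun h => hv (h ▸ (Finset.mem_erase.mp hw).2)
              rw [Equiv.swap_apply_of_ne_of_ne hwu hwv]
          have hSdecomp : ∑ w ∈ S, q w = q u + ∑ w ∈ S.erase u, q w :=
            (Finset.add_sum_erase S q hS.2.2).symm
          have h1 : 0 < ∑ w ∈ S.image e, q w := by
            rw [hkey]
            have : 0 ≤ ∑ w ∈ S.erase u, q w :=
              Finset.sum_nonneg (fun w _ => (hq_pos w).le)
            linarith [hq_pos v]
          apply one_div_le_one_div_of_le h1
          rw [hkey, hSdecomp]
          linarith
      -- existence of a strictly smaller term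
      have hex : ∃ S ∈ Tu, 1 / (∑ w ∈ S, q w) < 1 / (∑ w ∈ S.image e, q w) := by
        obtain ⟨t, ht_sub, ht_card⟩ :=
          Finset.exists_subset_card_eq
            (s := (Finset.univ : Finset U) \ {u, v}) (n := m - 1) (by
              rw [Finset.card_sdiff_of_subset (Finset.subset_univ _), Finset.card_univ, ← hM]
              have : ({u, v} : Finset U).card = 2 := by
                rw [Finset.card_insert_of_notMem (by simpa using huv),
                  Finset.card_singleton]
              omega)
        have hut : u ∉ t := fun h => by
          have := ht_sub h; simp at this
        have hvt : v ∉ t := fun h => by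
          have := ht_sub h; simp at this
        refine ⟨insert u t, ?_, ?_⟩
        · rw [hmemTu]
          exact ⟨Finset.subset_univ _, by
            rw [Finset.card_insert_of_notMem hut, ht_card]; omega,
            Finset.mem_insert_self _ _⟩
        · set S := insert u t with hS
          have hvS : v ∉ S := by
            simp only [hS, Finset.mem_insert]
            push_neg
            exact ⟨huv.symm, hvt⟩
          have huS : u ∈ S := Finset.mem_insert_self _ _
          have hkey : ∑ w ∈ S.image e, q w = q v + ∑ w ∈ S.erase u, q w := by
            rw [Finset.sum_image (fun a _ b _ h => e.injective h)]
            rw [← Finset.add_sum_erase S (fun x => q (e x)) huS]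
            congr 1
            · simp [e, Equiv.swap_apply_left]
            · apply Finset.sum_congr rfl
              intro w hw
              have hwu : w ≠ u := (Finset.mem_erase.mp hw).1
              have hwv : w ≠ v := fun h => hvS (h ▸ (Finset.mem_erase.mp hw).2)
              rw [Equiv.swap_apply_of_ne_of_ne hwu hwv]
          have hSdecomp : ∑ w ∈ S, q w = q u + ∑ w ∈ S.erase u, q w :=
            (Finset.add_sum_erase S q huS).symm
          have h0 : 0 ≤ ∑ w ∈ S.erase u, q w :=
            Finset.sum_nonneg (fun w _ => (hq_pos w).le)
          have h1 : 0 < ∑ w ∈ S.image e, q w := by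
            rw [hkey]; linarith [hq_pos v]
          apply one_div_lt_one_div_of_lt h1
          rw [hkey, hSdecomp]
          linarith
      have hlt2 : ∑ S ∈ Tu, 1 / (∑ w ∈ S, q w)
          < ∑ S ∈ Tv, 1 / (∑ w ∈ S, q w) := by
        rw [hsum_eq]
        obtain ⟨S0, hS0, hS0lt⟩ := hex
        exact Finset.sum_lt_sum hle ⟨S0, hS0, hS0lt⟩
      have : A u < A v := by
        rw [hA u, hA v]
        exact mul_lt_mul_of_pos_left hlt2 (by positivity)
      rw [hA1 u, hA1 v] at this
      exact lt_irrefl _ this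
    have hconst : ∀ u v : U, q u = q v := by
      intro u v
      rcases lt_trichotomy (q u) (q v) with h | h | h
      · exact absurd (key v u h) not_false
      · exact h
      · exact absurd (key u v h) not_false
    intro u
    have : ∑ v : U, q v = (Fintype.card U : ℝ) * q u := by
      rw [Finset.sum_congr rfl (fun v _ => hconst v u)]
      simp [Finset.card_univ, mul_comm]
    rw [hq_sum] at this
    rw [hM]
    have hcard0 : (0:ℝ) < (Fintype.card U : ℝ) := by rw [← hM]; exact hM0
    field_simp
    linarith [this]
  · -- sufficiency
    intro hq u
    rw [hA u]
    have hterm : ∀ S ∈ (Finset.univ.powersetCard m).filter (fun S => u ∈ S),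
        1 / (∑ v ∈ S, q v) = (M : ℝ) / m := by
      intro S hS
      rw [Finset.mem_filter, Finset.mem_powersetCard] at hS
      have : ∑ v ∈ S, q v = (m : ℝ) / M := by
        rw [Finset.sum_congr rfl (fun v _ => hq v), Finset.sum_const, hS.1.2]
        simp [div_eq_mul_inv]
      rw [this]
      rw [one_div_div]
    rw [Finset.sum_congr rfl hterm, Finset.sum_const,
      card_filter_mem_powersetCard u m hm_pos, ← hM]
    have hchoose : (M : ℝ) * ((M - 1).choose (m - 1) : ℝ) = (M.choose m : ℝ) * m := by
      have := Nat.add_one_mul_choose_eq (M - 1) (m - 1)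
      have h1 : M - 1 + 1 = M := by omega
      have h2 : m - 1 + 1 = m := by omega
      rw [h1, h2] at this
      exact_mod_cast this
    rw [nsmul_eq_mul]
    field_simp
    linarith [hchoose]
end

section
/- Let s be a sentence in a countable space Σ* with measure μ induced by P, let F_v(s) = ⟨v, T(s)⟩ with T mapping into the unit sphere of ℝ^d and v a unit vector, and let m_v ∈ ℝ. Suppose an attacker A satisfies 1 − ⟨T(A(s)), T(s)⟩ ≤ D for all s. Then the probability (under s ~ P) that F_v(A(s)) and F_v(s) lie on opposite sides of m_v is at most μ({s : F_v(s) ∈ [m_v − √(2D), m_v + √(2D)]}). -/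
open scoped RealInnerProductSpace

lemma sign_flip_abs {a b : ℝ} (h : Real.sign a ≠ Real.sign b) : |b| ≤ |a - b| := by
  rcases lt_trichotomy a 0 with ha | ha | ha
  · rcases lt_trichotomy b 0 with hb | hb | hb
    · exact absurd (by rw [Real.sign_of_neg ha, Real.sign_of_neg hb]) h
    · simp [hb]
    · rw [abs_of_pos hb, abs_of_neg (by linarith)]; linarith
  · simp [ha, abs_sub_comm]
  · rcases lt_trichotomy b 0 with hb | hb | hb
    · rw [abs_of_neg hb, abs_of_pos (by linarith)]; linarith
    · simp [hb]
    · exact absurd (by rw [Real.sign_of_pos ha, Real.sign_of_pos hb]) h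

/-- Semantic robustness on a single channel: if the attacker changes each sentence
embedding by at most `D` in cosine distance, then the probability that the proxy
score flips to the other side of `m_v` is at most the mass of the band of half-width
`√(2D)` around `m_v`. -/
theorem single_channel_semantic_robustness
    {α : Type*} [Countable α] (d : ℕ)
    (P : PMF α) (T : α → EuclideanSpace ℝ (Fin d)) (hT : ∀ s, ‖T s‖ = 1)
    (v : EuclideanSpace ℝ (Fin d)) (hv : ‖v‖ = 1)
    (A : α → α) (D : ℝ) (hD : 0 ≤ D)
    (hatk : ∀ s, 1 - ⟪T (A s), T s⟫ ≤ D)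
    (mᵥ : ℝ) :
    P.toOuterMeasure
        {s | Real.sign (⟪v, T (A s)⟫ - mᵥ) ≠ Real.sign (⟪v, T s⟫ - mᵥ)} ≤
      P.toOuterMeasure
        {s | ⟪v, T s⟫ ∈ Set.Icc (mᵥ - Real.sqrt (2 * D)) (mᵥ + Real.sqrt (2 * D))} := by
  apply P.toOuterMeasure.mono
  intro s hs
  simp only [Set.mem_setOf_eq] at hs ⊢
  -- distance bound
  have hdist : ‖T (A s) - T s‖ ≤ Real.sqrt (2 * D) := by
    have hsq : ‖T (A s) - T s‖ ^ 2 ≤ 2 * D := by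
      have := hatk s
      have h1 : ‖T (A s) - T s‖ ^ 2 =
          ‖T (A s)‖ ^ 2 - 2 * ⟪T (A s), T s⟫ + ‖T s‖ ^ 2 :=
        norm_sub_sq_real _ _
      rw [h1, hT, hT]; nlinarith
    calc ‖T (A s) - T s‖ = Real.sqrt (‖T (A s) - T s‖ ^ 2) := by
          rw [Real.sqrt_sq (norm_nonneg _)]
      _ ≤ Real.sqrt (2 * D) := Real.sqrt_le_sqrt hsq
  have hpert : |⟪v, T (A s)⟫ - ⟪v, T s⟫| ≤ Real.sqrt (2 * D) := by
    have : ⟪v, T (A s)⟫ - ⟪v, T s⟫ = ⟪v, T (A s) - T s⟫ := by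
      rw [inner_sub_right]
    rw [this]
    calc |⟪v, T (A s) - T s⟫| ≤ ‖v‖ * ‖T (A s) - T s‖ := abs_real_inner_le_norm _ _
      _ ≤ Real.sqrt (2 * D) := by rw [hv, one_mul]; exact hdist
  have hflip := sign_flip_abs hs
  have : |⟪v, T s⟫ - mᵥ| ≤ Real.sqrt (2 * D) := by
    calc |⟪v, T s⟫ - mᵥ| ≤ |(⟪v, T (A s)⟫ - mᵥ) - (⟪v, T s⟫ - mᵥ)| := hflip
      _ = |⟪v, T (A s)⟫ - ⟪v, T s⟫| := by ring_nf
      _ ≤ Real.sqrt (2 * D) := hpert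
  rw [abs_le] at this
  constructor <;> linarith [this.1, this.2]
end
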